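/- arXiv:1209.3898 — 2 statements merged into one kernel-verified Lean document; each statement's English description precedes it below -/
import Mathlib

section
/- Let A₁,…,A_d and B₁,…,B_d be D×D complex matrices such that ∑_{i=1}^d A_i A_i† = 𝟙, ∑_{i=1}^d B_i† Λ B_i = Λ for some positive-definite D×D matrix Λ, and such that whenever ∑_{i=1}^d B_i Y B_i† = μ Y for a nonzero D×D matrix Y and μ ∈ ℂ with |μ| = 1, then μ = 1 and Y is a scalar multiple of 𝟙. Suppose further that there exist NO θ ∈ ℝ and unitary U with e^{iθ} A_i = U B_i U† for all i. Then the spectral radius ρ of the D²×D² matrix 𝓔_{A,B} := ∑_{i=1}^d A_i ⊗ conj(B_i) satisfies ρ < 1, and consequently |tr(𝓔_{A,B}^N)| ≤ D² ρ^N for every integer N ≥ 1. -/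
/-!
An eigenvector of `𝓔 = ∑ i, A i ⊗ₖ conj (B i)` is a matrix `X` with
`∑ i, A i * X * (B i)ᴴ = μ • X`. In the norm `‖X‖²_Λ = tr (X Λ Xᴴ)`, the normalisations
`∑ A i (A i)ᴴ = 1` and `∑ (B i)ᴴ Λ B i = Λ` give
`∑ i, ‖X (B i)ᴴ - μ (A i)ᴴ X‖²_Λ = (1 - |μ|²) ‖X‖²_Λ`, so `|μ| ≤ 1`.
If `|μ| = 1` every term vanishes, so `X (B i)ᴴ = μ (A i)ᴴ X`; then `Xᴴ X` is a fixed point of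
`Y ↦ ∑ B i Y (B i)ᴴ`, hence a positive multiple of `1`, and `X` rescales to a unitary `U` with
`U (B i) Uᴴ = conj μ • A i`, which is excluded. The trace bound follows by writing
`tr (𝓔 ^ N)` as the sum of the `D²` eigenvalues of `𝓔 ^ N`, each of modulus at most `ρ ^ N`.
-/

open Matrix ComplexOrder Kronecker

namespace Matrix

section Spectrum

variable {n : Type*} [Fintype n] [DecidableEq n]

theorem norm_trace_le_card_mul {M : Matrix n n ℂ} {r : ℝ} (h : ∀ μ ∈ spectrum ℂ M, ‖μ‖ ≤ r) :
    ‖M.trace‖ ≤ Fintype.card n * r := by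
  have hcard : M.charpoly.roots.card = Fintype.card n := by
    rw [IsAlgClosed.card_roots_eq_natDegree, charpoly_natDegree_eq_dim]
  have hroots : ∀ x ∈ M.charpoly.roots.map (‖·‖), x ≤ r := by
    simp only [Multiset.mem_map, forall_exists_index, and_imp, forall_apply_eq_imp_iff₂]
    intro μ hμ
    exact h μ (mem_spectrum_iff_isRoot_charpoly.mpr (Polynomial.isRoot_of_mem_roots hμ))
  calc ‖M.trace‖ = ‖M.charpoly.roots.sum‖ := by rw [trace_eq_sum_roots_charpoly]
    _ ≤ (M.charpoly.roots.map (‖·‖)).sum := norm_multiset_sum_le _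
    _ ≤ Fintype.card n * r := by
      simpa [hcard] using Multiset.sum_le_card_nsmul _ _ hroots

theorem le_sSup_norm_spectrum (M : Matrix n n ℂ) {μ : ℂ} (hμ : μ ∈ spectrum ℂ M) :
    ‖μ‖ ≤ sSup ((fun z : ℂ => ‖z‖) '' spectrum ℂ M) :=
  le_csSup ((finite_spectrum M).image _).bddAbove ⟨μ, hμ, rfl⟩

theorem sSup_norm_spectrum_lt {M : Matrix n n ℂ} {r : ℝ} (hr : 0 < r)
    (h : ∀ μ ∈ spectrum ℂ M, ‖μ‖ < r) : sSup ((fun z : ℂ => ‖z‖) '' spectrum ℂ M) < r := by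
  rcases (spectrum ℂ M).eq_empty_or_nonempty with hempty | hne
  · simpa [hempty] using hr
  · rw [((finite_spectrum M).image _).csSup_lt_iff (hne.image _)]
    rintro _ ⟨μ, hμ, rfl⟩
    exact h μ hμ

theorem norm_trace_pow_le (M : Matrix n n ℂ) {N : ℕ} (hN : 1 ≤ N) :
    ‖(M ^ N).trace‖ ≤ Fintype.card n * sSup ((fun z : ℂ => ‖z‖) '' spectrum ℂ M) ^ N := by
  refine norm_trace_le_card_mul fun ν hν => ?_
  rw [spectrum.map_pow_of_pos M hN] at hν
  obtain ⟨μ, hμ, rfl⟩ := hν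
  rw [norm_pow]
  exact pow_le_pow_left₀ (norm_nonneg μ) (le_sSup_norm_spectrum M hμ) N

theorem exists_mulVec_eq_smul_of_mem_spectrum {M : Matrix n n ℂ} {μ : ℂ}
    (hμ : μ ∈ spectrum ℂ M) : ∃ v ≠ 0, M *ᵥ v = μ • v := by
  rw [← spectrum_toLin', ← Module.End.hasEigenvalue_iff_mem_spectrum] at hμ
  obtain ⟨v, hv, hv0⟩ := hμ.exists_hasEigenvector
  exact ⟨v, hv0, by simpa using Module.End.mem_eigenspace_iff.mp hv⟩

end Spectrum

/-- Pythagoras for the co-isometry `Z ↦ ∑ j, A j * Z j`: `Z i - (A i)ᴴ * W` is the component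
of `Z` orthogonal to the range of its adjoint. -/
theorem sum_trace_sub_mul_mul_conjTranspose {ι R m n k : Type*} [Fintype ι] [Fintype m]
    [Fintype n] [Fintype k] [DecidableEq m] [CommRing R] [StarRing R] (A : ι → Matrix m n R)
    (hA : ∑ i, A i * (A i)ᴴ = 1) (Λ : Matrix k k R) (Z : ι → Matrix n k R) :
    ∑ i, ((Z i - (A i)ᴴ * ∑ j, A j * Z j) * Λ * (Z i - (A i)ᴴ * ∑ j, A j * Z j)ᴴ).trace =
      ∑ i, (Z i * Λ * (Z i)ᴴ).trace - ((∑ j, A j * Z j) * Λ * (∑ j, A j * Z j)ᴴ).trace := by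
  set W := ∑ j, A j * Z j with hW
  have expand : ∀ i, ((Z i - (A i)ᴴ * W) * Λ * (Z i - (A i)ᴴ * W)ᴴ).trace =
      (Z i * Λ * (Z i)ᴴ).trace - (A i * Z i * (Λ * Wᴴ)).trace - (W * Λ * (A i * Z i)ᴴ).trace
        + (W * Λ * Wᴴ * (A i * (A i)ᴴ)).trace := by
    intro i
    rw [show (Z i - (A i)ᴴ * W) * Λ * (Z i - (A i)ᴴ * W)ᴴ = Z i * Λ * (Z i)ᴴ
        - Z i * Λ * Wᴴ * A i - (A i)ᴴ * (W * Λ * (Z i)ᴴ) + (A i)ᴴ * (W * Λ * Wᴴ * A i) by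
      simp only [conjTranspose_sub, conjTranspose_mul, conjTranspose_conjTranspose,
        Matrix.sub_mul, Matrix.mul_sub, Matrix.mul_assoc]
      abel]
    rw [trace_add, trace_sub, trace_sub, trace_mul_comm _ (A i), trace_mul_comm (A i)ᴴ,
      trace_mul_comm (A i)ᴴ]
    simp only [conjTranspose_mul, Matrix.mul_assoc]
  simp only [expand, Finset.sum_add_distrib, Finset.sum_sub_distrib, ← trace_sum,
    ← Matrix.sum_mul, ← Matrix.mul_sum, ← conjTranspose_sum, hA, Matrix.mul_one]
  rw [← hW, Matrix.mul_assoc W]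
  ring

theorem PosDef.trace_mul_mul_conjTranspose_eq_zero_iff {m n 𝕜 : Type*} [Fintype m] [Fintype n]
    [RCLike 𝕜] {Λ : Matrix n n 𝕜} (hΛ : Λ.PosDef) {Z : Matrix m n 𝕜} :
    (Z * Λ * Zᴴ).trace = 0 ↔ Z = 0 := by
  refine ⟨fun h => ?_, fun h => by simp [h]⟩
  have hzero := (hΛ.posSemidef.mul_mul_conjTranspose_same Z).trace_eq_zero_iff.mp h
  ext i j
  have hrow : star (Z i) = 0 := by
    by_contra hne
    have hpos := hΛ.dotProduct_mulVec_pos hne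
    have hdiag := congrFun (congrFun hzero i) i
    rw [Matrix.mul_assoc] at hdiag
    simp only [mul_apply, conjTranspose_apply, zero_apply] at hdiag
    simp only [star_star, dotProduct, mulVec, Pi.star_apply] at hpos
    exact hpos.ne' hdiag
  simpa using congrFun hrow j

section Unitary

variable {n : Type*} [Fintype n] [DecidableEq n]

theorem exists_smul_mem_unitaryGroup_of_conjTranspose_mul_self_eq_smul_one {X : Matrix n n ℂ}
    (hX0 : X ≠ 0) {c : ℂ} (hc : Xᴴ * X = c • 1) :
    ∃ s : ℂ, s ≠ 0 ∧ ∃ U ∈ unitaryGroup n ℂ, X = s • U := by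
  have hc0 : c ≠ 0 := by
    rintro rfl
    exact hX0 (conjTranspose_mul_self_eq_zero.mp (by simpa using hc))
  obtain ⟨i, j, hij⟩ : ∃ i j, X i j ≠ 0 := by
    by_contra! h
    exact hX0 (ext h)
  have hc_nonneg : 0 ≤ c := by
    simpa [hc] using (posSemidef_conjTranspose_mul_self X).diag_nonneg (i := j)
  obtain ⟨r, hr, hrc⟩ := RCLike.pos_iff_exists_ofReal.mp (hc_nonneg.lt_of_ne' hc0)
  replace hrc : (r : ℂ) = c := hrc
  have hs : ((√r : ℝ) : ℂ) ≠ 0 := Complex.ofReal_ne_zero.mpr (Real.sqrt_pos.mpr hr).ne'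
  refine ⟨√r, hs, ((√r : ℝ) : ℂ)⁻¹ • X, ?_, by rw [smul_smul, mul_inv_cancel₀ hs, one_smul]⟩
  rw [mem_unitaryGroup_iff', star_eq_conjTranspose, conjTranspose_smul, Matrix.smul_mul,
    Matrix.mul_smul, hc, ← hrc, smul_smul, smul_smul, star_inv₀, Complex.star_def,
    Complex.conj_ofReal, ← mul_inv, ← Complex.ofReal_mul, Real.mul_self_sqrt hr.le,
    inv_mul_cancel₀ (Complex.ofReal_ne_zero.mpr hr.ne'), one_smul]

theorem mul_mul_conjTranspose_eq_star_smul {U : Matrix n n ℂ} (hU : U ∈ unitaryGroup n ℂ)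
    {s μ : ℂ} (hs : s ≠ 0) {A B : Matrix n n ℂ} (h : (s • U) * Bᴴ = μ • (Aᴴ * (s • U))) :
    U * B * Uᴴ = star μ • A := by
  rw [Matrix.smul_mul, Matrix.mul_smul, smul_comm] at h
  have hBU : B * Uᴴ = star μ • (Uᴴ * A) := by
    simpa using congrArg conjTranspose (smul_right_injective _ hs h)
  rw [Matrix.mul_assoc, hBU, Matrix.mul_smul, ← Matrix.mul_assoc,
    ← star_eq_conjTranspose, Unitary.mul_star_self_of_mem hU, Matrix.one_mul]

end Unitary

end Matrix

section TransferMap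

variable {ι R n : Type*} [Fintype ι] [Fintype n]

/-- The transfer operator `∑ i, A i ⊗ₖ conj (B i)` acting on matrices rather than on vectors. -/
def transferMap [Mul R] [AddCommMonoid R] [Star R] (A B : ι → Matrix n n R) (X : Matrix n n R) :
    Matrix n n R :=
  ∑ i, A i * X * (B i)ᴴ

/-- `vec` stacks columns, whereas the Kronecker index `(a, b)` of `𝓔` reads `X a b`; hence
the transposes. -/
theorem sum_kronecker_map_star_mulVec_vec_transpose (A B : ι → Matrix n n ℂ) (X : Matrix n n ℂ) :
    (∑ i, A i ⊗ₖ (B i).map (starRingEnd ℂ)) *ᵥ vec Xᵀ = vec (transferMap A B X)ᵀ := by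
  simp only [transferMap, sum_mulVec, kronecker_mulVec_vec, transpose_sum, vec_sum,
    transpose_mul, conjTranspose_transpose, Matrix.mul_assoc]
  rfl

theorem exists_transferMap_eq_smul_of_mem_spectrum [DecidableEq n] {A B : ι → Matrix n n ℂ}
    {μ : ℂ} (hμ : μ ∈ spectrum ℂ (∑ i, A i ⊗ₖ (B i).map (starRingEnd ℂ))) :
    ∃ X ≠ 0, transferMap A B X = μ • X := by
  obtain ⟨v, hv0, hv⟩ := exists_mulVec_eq_smul_of_mem_spectrum hμ
  obtain ⟨Y, rfl⟩ := vec_bijective.surjective v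
  refine ⟨Yᵀ, by simpa using hv0, ?_⟩
  rwa [← transpose_transpose Y, sum_kronecker_map_star_mulVec_vec_transpose, ← vec_smul,
    vec_inj, ← transpose_smul, transpose_inj] at hv

theorem sum_trace_defect_eq_of_transferMap_eq_smul [DecidableEq n] [CommRing R] [StarRing R]
    {A B : ι → Matrix n n R} {Λ X : Matrix n n R} {μ : R} (hA : ∑ i, A i * (A i)ᴴ = 1)
    (hB : ∑ i, (B i)ᴴ * Λ * B i = Λ) (hX : transferMap A B X = μ • X) :
    ∑ i, ((X * (B i)ᴴ - μ • ((A i)ᴴ * X)) * Λ * (X * (B i)ᴴ - μ • ((A i)ᴴ * X))ᴴ).trace =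
      (1 - star μ * μ) * (X * Λ * Xᴴ).trace := by
  have hW : ∑ i, A i * (X * (B i)ᴴ) = μ • X := by
    simpa only [transferMap, Matrix.mul_assoc] using hX
  have hZ : ∑ i, (X * (B i)ᴴ * Λ * (X * (B i)ᴴ)ᴴ).trace = (X * Λ * Xᴴ).trace := by
    simp only [conjTranspose_mul, conjTranspose_conjTranspose, ← trace_sum]
    conv_rhs => rw [← hB]
    simp only [Matrix.mul_sum, Matrix.sum_mul, Matrix.mul_assoc]
  have pythagoras := sum_trace_sub_mul_mul_conjTranspose A hA Λ fun i => X * (B i)ᴴ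
  rw [hW, hZ] at pythagoras
  simp only [Matrix.mul_smul] at pythagoras
  rw [pythagoras, conjTranspose_smul, Matrix.smul_mul, Matrix.smul_mul, Matrix.mul_smul,
    trace_smul, trace_smul, smul_eq_mul, smul_eq_mul]
  ring

variable [DecidableEq n] {A B : ι → Matrix n n ℂ} {Λ X : Matrix n n ℂ} {μ : ℂ}

theorem norm_le_one_of_transferMap_eq_smul (hΛ : Λ.PosDef) (hA : ∑ i, A i * (A i)ᴴ = 1)
    (hB : ∑ i, (B i)ᴴ * Λ * B i = Λ) (hX0 : X ≠ 0) (hX : transferMap A B X = μ • X) :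
    ‖μ‖ ≤ 1 := by
  have hdefect : 0 ≤ (1 - star μ * μ) * (X * Λ * Xᴴ).trace := by
    rw [← sum_trace_defect_eq_of_transferMap_eq_smul hA hB hX]
    exact Finset.sum_nonneg fun i _ => (hΛ.posSemidef.mul_mul_conjTranspose_same _).trace_nonneg
  obtain ⟨t, ht, htrace⟩ := RCLike.pos_iff_exists_ofReal.mp <|
    (hΛ.posSemidef.mul_mul_conjTranspose_same X).trace_nonneg.lt_of_ne'
      (hΛ.trace_mul_mul_conjTranspose_eq_zero_iff.not.mpr hX0)
  replace htrace : (t : ℂ) = (X * Λ * Xᴴ).trace := htrace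
  rw [← htrace, Complex.star_def, Complex.conj_mul', ← Complex.ofReal_pow, ← Complex.ofReal_one,
    ← Complex.ofReal_sub, ← Complex.ofReal_mul, Complex.zero_le_real,
    mul_nonneg_iff_of_pos_right ht, sub_nonneg] at hdefect
  exact (pow_le_one_iff_of_nonneg (norm_nonneg μ) two_ne_zero).mp hdefect

theorem mul_conjTranspose_eq_smul_of_transferMap_eq_smul (hΛ : Λ.PosDef)
    (hA : ∑ i, A i * (A i)ᴴ = 1) (hB : ∑ i, (B i)ᴴ * Λ * B i = Λ)
    (hX : transferMap A B X = μ • X) (hμ : ‖μ‖ = 1) (i : ι) :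
    X * (B i)ᴴ = μ • ((A i)ᴴ * X) := by
  have hdefect := sum_trace_defect_eq_of_transferMap_eq_smul hA hB hX
  rw [Complex.star_def, Complex.conj_mul', hμ] at hdefect
  simp only [Complex.ofReal_one, one_pow, sub_self, zero_mul] at hdefect
  rw [Finset.sum_eq_zero_iff_of_nonneg fun i _ =>
    (hΛ.posSemidef.mul_mul_conjTranspose_same _).trace_nonneg] at hdefect
  exact sub_eq_zero.mp <|
    hΛ.trace_mul_mul_conjTranspose_eq_zero_iff.mp (hdefect i (Finset.mem_univ i))

theorem norm_lt_one_of_transferMap_eq_smul (hΛ : Λ.PosDef) (hA : ∑ i, A i * (A i)ᴴ = 1)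
    (hB : ∑ i, (B i)ᴴ * Λ * B i = Λ)
    (hBfix : ∀ Y : Matrix n n ℂ, Y ≠ 0 → transferMap B B Y = Y → ∃ c : ℂ, Y = c • 1)
    (hdiff : ¬ ∃ (θ : ℝ) (U : Matrix n n ℂ), Uᴴ * U = 1 ∧
      ∀ i, Complex.exp (θ * Complex.I) • A i = U * B i * Uᴴ)
    (hX0 : X ≠ 0) (hX : transferMap A B X = μ • X) : ‖μ‖ < 1 := by
  refine (norm_le_one_of_transferMap_eq_smul hΛ hA hB hX0 hX).lt_of_ne fun hμ => hdiff ?_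
  have hXB := mul_conjTranspose_eq_smul_of_transferMap_eq_smul hΛ hA hB hX hμ
  have hμμ : μ * star μ = 1 := by
    rw [Complex.star_def, Complex.mul_conj', hμ, Complex.ofReal_one, one_pow]
  have hfix : transferMap B B (Xᴴ * X) = Xᴴ * X := by
    calc transferMap B B (Xᴴ * X) = ∑ i, (X * (B i)ᴴ)ᴴ * (X * (B i)ᴴ) := by
          simp only [transferMap, conjTranspose_mul, conjTranspose_conjTranspose,
            Matrix.mul_assoc]
      _ = Xᴴ * (∑ i, A i * (A i)ᴴ) * X := by
          simp only [hXB, conjTranspose_smul, conjTranspose_mul, conjTranspose_conjTranspose,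
            Matrix.smul_mul, Matrix.mul_smul, smul_smul, hμμ, one_smul, Matrix.mul_sum,
            Matrix.sum_mul, Matrix.mul_assoc]
      _ = Xᴴ * X := by rw [hA, Matrix.mul_one]
  obtain ⟨c, hc⟩ := hBfix _ (mt conjTranspose_mul_self_eq_zero.mp hX0) hfix
  obtain ⟨s, hs, U, hU, rfl⟩ :=
    exists_smul_mem_unitaryGroup_of_conjTranspose_mul_self_eq_smul_one hX0 hc
  refine ⟨Complex.arg (star μ), U, mem_unitaryGroup_iff'.mp hU, fun i => ?_⟩
  have hphase : Complex.exp (Complex.arg (star μ) * Complex.I) = star μ := by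
    simpa [hμ] using Complex.norm_mul_exp_arg_mul_I (star μ)
  rw [hphase, mul_mul_conjTranspose_eq_star_smul hU hs (hXB i)]

end TransferMap

/-- for two canonical (injective) MPS tensors `A`, `B` that are NOT related by
a phase times a unitary conjugation, the spectral radius `ρ` of the transfer operator
`𝓔_{A,B} = ∑ i, A i ⊗ conj (B i)` satisfies `ρ < 1`, hence `|tr 𝓔_{A,B}^N| ≤ D² ρ^N`. -/
theorem transfer_operator_spectral_radius_lt_one
    (D d : ℕ) (A B : Fin d → Matrix (Fin D) (Fin D) ℂ)
    (Λ : Matrix (Fin D) (Fin D) ℂ) (hΛ : Λ.PosDef)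
    (hA : ∑ i, A i * (A i)ᴴ = 1)
    (hB : ∑ i, (B i)ᴴ * Λ * B i = Λ)
    (hBprim : ∀ (μ : ℂ) (Y : Matrix (Fin D) (Fin D) ℂ), Y ≠ 0 → ‖μ‖ = 1 →
      ∑ i, B i * Y * (B i)ᴴ = μ • Y → μ = 1 ∧ ∃ c : ℂ, Y = c • (1 : Matrix (Fin D) (Fin D) ℂ))
    (hdiff : ¬ ∃ (θ : ℝ) (U : Matrix (Fin D) (Fin D) ℂ), Uᴴ * U = 1 ∧
      ∀ i, Complex.exp (θ * Complex.I) • A i = U * B i * Uᴴ) :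
    (sSup ((fun z : ℂ => ‖z‖) '' spectrum ℂ (∑ i, (A i) ⊗ₖ ((B i).map (starRingEnd ℂ)))) < 1) ∧
    ∀ N : ℕ, 1 ≤ N →
      ‖(Matrix.trace ((∑ i, (A i) ⊗ₖ ((B i).map (starRingEnd ℂ))) ^ N))‖ ≤
        (D : ℝ) ^ 2 *
          (sSup ((fun z : ℂ => ‖z‖) '' spectrum ℂ (∑ i, (A i) ⊗ₖ ((B i).map (starRingEnd ℂ))))) ^ N := by
  have hspec : ∀ μ ∈ spectrum ℂ (∑ i, A i ⊗ₖ (B i).map (starRingEnd ℂ)), ‖μ‖ < 1 := by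
    intro μ hμ
    obtain ⟨X, hX0, hX⟩ := exists_transferMap_eq_smul_of_mem_spectrum hμ
    exact norm_lt_one_of_transferMap_eq_smul hΛ hA hB
      (fun Y hY hfix => (hBprim 1 Y hY norm_one (by rwa [one_smul])).2) hdiff hX0 hX
  refine ⟨sSup_norm_spectrum_lt one_pos hspec, fun N hN => ?_⟩
  simpa [Fintype.card_prod, sq] using
    norm_trace_pow_le (∑ i, A i ⊗ₖ (B i).map (starRingEnd ℂ)) hN
end

section
/- Let d, D, n be positive integers and A₁,…,A_d be D×D complex matrices. Define the linear map Γ_n from D×D matrices to ℂ^{d^n} by (Γ_n(X))_{(i₁,…,i_n)} = tr(X A_{i₁}⋯A_{i_n}) for (i₁,…,i_n) ∈ {1,…,d}^n, and the linear maps Φ(X) = ∑_{i=1}^d A_i X A_i† and Φ^∞(X) = tr(X)·𝟙/D on D×D matrices. If ‖Φ^n − Φ^∞‖_op < 1/D², where ‖·‖_op is the operator norm with respect to the Frobenius norm on D×D matrices, then Γ_n is injective. -/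
open Matrix

/-- The Frobenius norm `(tr Mᴴ M)^(1/2)` of a complex square matrix. -/
noncomputable def frobNorm {n : Type*} [Fintype n] (M : Matrix n n ℂ) : ℝ :=
  Real.sqrt ((Mᴴ * M).trace.re)

/-- The operator norm of a map on `D × D` complex matrices with respect to the
Frobenius norm. -/
noncomputable def opNormF {D : ℕ}
    (T : Matrix (Fin D) (Fin D) ℂ → Matrix (Fin D) (Fin D) ℂ) : ℝ :=
  sSup {r : ℝ | ∃ X : Matrix (Fin D) (Fin D) ℂ, frobNorm X = 1 ∧ r = frobNorm (T X)}

/-- The map sending a boundary condition `X` to the MPS vector of `n` sites: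
`(Γ_n X)_{(i₁,…,i_n)} = tr (X A_{i₁} ⋯ A_{i_n})`. -/
noncomputable def Gamma (d D n : ℕ) (A : Fin d → Matrix (Fin D) (Fin D) ℂ)
    (X : Matrix (Fin D) (Fin D) ℂ) : (Fin n → Fin d) → ℂ :=
  fun i => (X * (List.ofFn fun t => A (i t)).prod).trace

/-!
If `Γ_n Z = 0`, test the Choi matrices of `Φ^n` and `Φ^∞` against the vector `conj Z`.
The Kraus operators of `Φ^n` are the words `W = A_{i₁} ⋯ A_{i_n}`, so the Choi form of `Φ^n`
is `∑_W |tr (Z W)|² = 0`, while that of `Φ^∞` is `‖Z‖² / D`. Hence the Choi form of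
`T = Φ^n − Φ^∞` has modulus `‖Z‖² / D`. Bounding each entry `(Z T(E_ae) Zᴴ)_ae` by
`‖Z_a‖ ‖T‖_op ‖Z_e‖` and applying Cauchy–Schwarz to the row norms of `Z` gives at most
`D ‖T‖_op ‖Z‖² < ‖Z‖² / D`, forcing `Z = 0`.
-/

attribute [local instance] Matrix.frobeniusNormedAddCommGroup Matrix.frobeniusNormedSpace

namespace Matrix

variable {m n 𝕜 : Type*} [Fintype m] [Fintype n] [RCLike 𝕜]

lemma frobenius_norm_sq_eq_sum_rows (M : Matrix m n 𝕜) :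
    ‖M‖ ^ 2 = ∑ i, ‖WithLp.toLp 2 (M i)‖ ^ 2 :=
  PiLp.norm_sq_eq_of_L2 _ (WithLp.toLp 2 fun i => WithLp.toLp 2 (M i))

lemma norm_apply_le_frobenius_norm (M : Matrix m n 𝕜) (i : m) (j : n) : ‖M i j‖ ≤ ‖M‖ :=
  (PiLp.norm_apply_le (WithLp.toLp 2 (M i)) j).trans
    (PiLp.norm_apply_le (WithLp.toLp 2 fun i => WithLp.toLp 2 (M i)) i)

lemma frobenius_norm_single_one [DecidableEq m] [DecidableEq n] (a : m) (e : n) :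
    ‖single a e (1 : 𝕜)‖ = 1 := by
  rw [← pow_eq_one_iff_of_nonneg (norm_nonneg _) two_ne_zero, frobenius_norm_sq_eq_sum_rows,
    Finset.sum_eq_single a]
  · rw [EuclideanSpace.norm_sq_eq, Finset.sum_eq_single e]
    · simp
    · intro b _ hb
      simp [single_apply_of_col_ne _ _ (Ne.symm hb)]
    · simp
  · intro b _ hb
    simp [EuclideanSpace.norm_sq_eq, single_apply_of_row_ne hb.symm]
  · simp

lemma trace_mul_conjTranspose_self (M : Matrix m n 𝕜) :
    (M * Mᴴ).trace = ((‖M‖ ^ 2 : ℝ) : 𝕜) := by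
  simp only [frobenius_norm_sq_eq_sum_rows, EuclideanSpace.norm_sq_eq, trace, diag_apply,
    mul_apply, conjTranspose_apply, RCLike.ofReal_sum, RCLike.ofReal_pow]
  refine Finset.sum_congr rfl fun i _ => Finset.sum_congr rfl fun j _ => ?_
  exact RCLike.mul_conj (M i j)

omit [Fintype m] in
lemma mul_single_one_mul_conjTranspose_apply [DecidableEq n] (C : Matrix m n 𝕜) (a a' : m)
    (b c : n) : (C * single b c (1 : 𝕜) * Cᴴ) a a' = C a b * star (C a' c) := by
  rw [mul_apply, Finset.sum_eq_single c]
  · rw [mul_single_apply_same, mul_one, conjTranspose_apply]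
  · intro k _ hk
    rw [mul_single_apply_of_ne (hbj := hk), zero_mul]
  · simp

omit [Fintype m] in
lemma norm_mul_mul_conjTranspose_apply_le (Z : Matrix m n 𝕜) (M : Matrix n n 𝕜) (a e : m) :
    ‖(Z * M * Zᴴ) a e‖ ≤ ‖WithLp.toLp 2 (Z a)‖ * ‖M‖ * ‖WithLp.toLp 2 (Z e)‖ := by
  have hrow : (Z * M * Zᴴ) a e
      = (replicateRow Unit (Z a) * M * (replicateRow Unit (Z e))ᴴ) () () := by
    simp [mul_apply, conjTranspose_apply]
  rw [hrow, ← frobenius_norm_replicateRow (ι := Unit), ← frobenius_norm_replicateRow (ι := Unit),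
    ← frobenius_norm_conjTranspose (replicateRow Unit (Z e))]
  refine (norm_apply_le_frobenius_norm _ () ()).trans ?_
  exact (frobenius_norm_mul _ _).trans
    (mul_le_mul_of_nonneg_right (frobenius_norm_mul _ _) (norm_nonneg _))

end Matrix

lemma frobNorm_eq_norm {D : ℕ} (M : Matrix (Fin D) (Fin D) ℂ) : frobNorm M = ‖M‖ := by
  rw [frobNorm, trace_mul_comm, trace_mul_conjTranspose_self, RCLike.ofReal_eq_complex_ofReal,
    Complex.ofReal_re, Real.sqrt_sq (norm_nonneg M)]

section Channels

variable {𝕜 ι κ : Type*} [RCLike 𝕜] [Fintype ι]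

def conjMap (B : Matrix ι ι 𝕜) : Matrix ι ι 𝕜 →ₗ[𝕜] Matrix ι ι 𝕜 :=
  LinearMap.mulLeft 𝕜 B ∘ₗ LinearMap.mulRight 𝕜 Bᴴ

@[simp]
lemma conjMap_apply (B X : Matrix ι ι 𝕜) : conjMap B X = B * X * Bᴴ :=
  (Matrix.mul_assoc _ _ _).symm

lemma conjMap_mul (B C : Matrix ι ι 𝕜) : conjMap (B * C) = conjMap B * conjMap C :=
  LinearMap.ext fun X => by simp [conjTranspose_mul, Matrix.mul_assoc]

def krausMap [Fintype κ] (A : κ → Matrix ι ι 𝕜) : Matrix ι ι 𝕜 →ₗ[𝕜] Matrix ι ι 𝕜 :=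
  ∑ i, conjMap (A i)

lemma coe_krausMap [Fintype κ] (A : κ → Matrix ι ι 𝕜) :
    ⇑(krausMap A) = fun X => ∑ i, A i * X * (A i)ᴴ := by
  ext1 X
  simp [krausMap]

def wordProd [DecidableEq ι] (A : κ → Matrix ι ι 𝕜) {n : ℕ} (w : Fin n → κ) : Matrix ι ι 𝕜 :=
  (List.ofFn fun t => A (w t)).prod

lemma wordProd_cons [DecidableEq ι] (A : κ → Matrix ι ι 𝕜) {n : ℕ} (i : κ) (w : Fin n → κ) :
    wordProd A (Fin.cons i w : Fin (n + 1) → κ) = A i * wordProd A w := by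
  simp [wordProd, List.ofFn_succ]

lemma krausMap_pow [DecidableEq ι] [Fintype κ] (A : κ → Matrix ι ι 𝕜) (n : ℕ) :
    krausMap A ^ n = ∑ w : Fin n → κ, conjMap (wordProd A w) := by
  induction n with
  | zero => ext X : 1; simp [wordProd]
  | succ n ih =>
    rw [pow_succ', ih, krausMap, Finset.sum_mul_sum, ← (Fin.consEquiv fun _ => κ).sum_comp,
      Fintype.sum_prod_type]
    simp [Fin.consEquiv, wordProd_cons, conjMap_mul]

variable (𝕜 ι) in
noncomputable def depolarizing [DecidableEq ι] : Matrix ι ι 𝕜 →ₗ[𝕜] Matrix ι ι 𝕜 :=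
  (Fintype.card ι : 𝕜)⁻¹ • (traceLinearMap ι 𝕜 𝕜).smulRight 1

lemma depolarizing_apply [DecidableEq ι] (X : Matrix ι ι 𝕜) :
    depolarizing 𝕜 ι X = (X.trace / Fintype.card ι) • 1 := by
  simp [depolarizing, smul_smul, div_eq_inv_mul]

end Channels

section ChoiForm

variable {𝕜 ι : Type*} [RCLike 𝕜] [Fintype ι] [DecidableEq ι]

/-- The quadratic form `v† C_T v` of the Choi matrix `C_T = ∑ a e, single a e 1 ⊗ T (single a e 1)`
at the vector `v (a, b) = conj (Z a b)`. -/
def choiForm (Z : Matrix ι ι 𝕜) : (Matrix ι ι 𝕜 →ₗ[𝕜] Matrix ι ι 𝕜) →ₗ[𝕜] 𝕜 where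
  toFun T := ∑ a, ∑ e, (Z * T (single a e 1) * Zᴴ) a e
  map_add' S T := by simp [Matrix.mul_add, Matrix.add_mul, Finset.sum_add_distrib]
  map_smul' c T := by simp [Finset.mul_sum]

lemma choiForm_apply (Z : Matrix ι ι 𝕜) (T : Matrix ι ι 𝕜 →ₗ[𝕜] Matrix ι ι 𝕜) :
    choiForm Z T = ∑ a, ∑ e, (Z * T (single a e 1) * Zᴴ) a e :=
  rfl

lemma choiForm_conjMap (Z B : Matrix ι ι 𝕜) :
    choiForm Z (conjMap B) = ((‖(Z * B).trace‖ ^ 2 : ℝ) : 𝕜) := by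
  have hentry (a e : ι) : (Z * conjMap B (single a e 1) * Zᴴ) a e
      = (Z * B) a a * star ((Z * B) e e) := by
    rw [← mul_single_one_mul_conjTranspose_apply, conjMap_apply, conjTranspose_mul]
    simp only [Matrix.mul_assoc]
  rw [choiForm_apply, RCLike.ofReal_pow, ← RCLike.mul_conj]
  simp only [hentry, ← Finset.sum_mul_sum, ← star_sum]
  rfl

lemma choiForm_depolarizing (Z : Matrix ι ι 𝕜) :
    choiForm Z (depolarizing 𝕜 ι) = ((‖Z‖ ^ 2 / Fintype.card ι : ℝ) : 𝕜) := by
  have hrow (a : ι) : ∑ e, (Z * depolarizing 𝕜 ι (single a e 1) * Zᴴ) a e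
      = (Z * Zᴴ) a a / Fintype.card ι := by
    rw [Finset.sum_eq_single a]
    · simp [depolarizing_apply, trace_single_eq_same, div_eq_inv_mul]
    · intro e _ he
      simp [depolarizing_apply, trace_single_eq_of_ne a e _ he.symm]
    · simp
  simp only [choiForm_apply, hrow, ← Finset.sum_div]
  rw [show ∑ a, (Z * Zᴴ) a a = (Z * Zᴴ).trace from rfl, trace_mul_conjTranspose_self,
    RCLike.ofReal_div, RCLike.ofReal_natCast]

lemma norm_choiForm_le (Z : Matrix ι ι 𝕜) (T : Matrix ι ι 𝕜 →ₗ[𝕜] Matrix ι ι 𝕜) {ε : ℝ}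
    (hT : ∀ a e, ‖T (single a e 1)‖ ≤ ε) :
    ‖choiForm Z T‖ ≤ Fintype.card ι * ε * ‖Z‖ ^ 2 := by
  rcases isEmpty_or_nonempty ι with _ | ⟨⟨a₀⟩⟩
  · simp [choiForm_apply]
  have hε : 0 ≤ ε := (norm_nonneg _).trans (hT a₀ a₀)
  set ρ : ι → ℝ := fun a => ‖WithLp.toLp 2 (Z a)‖
  calc ‖choiForm Z T‖ ≤ ∑ a, ∑ e, ρ a * ε * ρ e := by
        refine (norm_sum_le _ _).trans (Finset.sum_le_sum fun a _ => ?_)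
        refine (norm_sum_le _ _).trans (Finset.sum_le_sum fun e _ => ?_)
        refine (norm_mul_mul_conjTranspose_apply_le Z _ a e).trans ?_
        gcongr
        exact hT a e
    _ = ε * (∑ a, ρ a) ^ 2 := by
        rw [sq, Finset.sum_mul_sum, Finset.mul_sum]
        simp only [Finset.mul_sum]
        exact Finset.sum_congr rfl fun _ _ => Finset.sum_congr rfl fun _ _ => by ring
    _ ≤ ε * (Fintype.card ι * ∑ a, ρ a ^ 2) := by
        gcongr
        exact sq_sum_le_card_mul_sum_sq
    _ = Fintype.card ι * ε * ‖Z‖ ^ 2 := by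
        rw [frobenius_norm_sq_eq_sum_rows]
        ring

end ChoiForm

lemma norm_apply_le_opNormF {D : ℕ}
    (T : Matrix (Fin D) (Fin D) ℂ →ₗ[ℂ] Matrix (Fin D) (Fin D) ℂ)
    {X : Matrix (Fin D) (Fin D) ℂ} (hX : ‖X‖ = 1) : ‖T X‖ ≤ opNormF T := by
  obtain ⟨C, -, hC⟩ := SemilinearMapClass.bound_of_continuous T T.continuous_of_finiteDimensional
  refine le_csSup ⟨C, ?_⟩ ⟨X, by rwa [frobNorm_eq_norm], by rw [frobNorm_eq_norm]⟩
  rintro _ ⟨Y, hY, rfl⟩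
  rw [frobNorm_eq_norm] at hY ⊢
  simpa [hY] using hC Y

lemma coe_krausMap_pow_sub_depolarizing {d D : ℕ} (A : Fin d → Matrix (Fin D) (Fin D) ℂ)
    (n : ℕ) :
    ⇑(krausMap A ^ n - depolarizing ℂ (Fin D)) = fun Y =>
      (fun Z => ∑ i, A i * Z * (A i)ᴴ)^[n] Y -
        (Y.trace / (D : ℂ)) • (1 : Matrix (Fin D) (Fin D) ℂ) := by
  ext1 Y
  simp [Module.End.coe_pow, coe_krausMap, depolarizing_apply]

lemma eq_zero_of_expander_gap {d D n : ℕ} (A : Fin d → Matrix (Fin D) (Fin D) ℂ)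
    (hgap : opNormF ⇑(krausMap A ^ n - depolarizing ℂ (Fin D)) < 1 / (D : ℝ) ^ 2)
    {Z : Matrix (Fin D) (Fin D) ℂ} (hZ : ∀ w : Fin n → Fin d, (Z * wordProd A w).trace = 0) :
    Z = 0 := by
  by_contra hZ0
  set T := krausMap A ^ n - depolarizing ℂ (Fin D)
  have hD : (0 : ℝ) < D := by
    exact_mod_cast Nat.pos_of_ne_zero fun h => hZ0 (by subst h; exact Subsingleton.elim _ _)
  have hkraus : choiForm Z (krausMap A ^ n) = 0 := by
    simp [krausMap_pow, choiForm_conjMap, hZ]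
  have hsplit : choiForm Z T = -((‖Z‖ ^ 2 / D : ℝ) : ℂ) := by
    rw [map_sub, hkraus, choiForm_depolarizing, zero_sub, Fintype.card_fin]
    rfl
  have hbound :=
    norm_choiForm_le Z T fun a e => norm_apply_le_opNormF T (frobenius_norm_single_one a e)
  rw [hsplit, norm_neg, Complex.norm_real, Real.norm_of_nonneg (by positivity), Fintype.card_fin]
    at hbound
  have hZpos : 0 < ‖Z‖ := norm_pos_iff.mpr hZ0
  have : (D : ℝ) * opNormF T * ‖Z‖ ^ 2 < ‖Z‖ ^ 2 / D :=
    calc (D : ℝ) * opNormF T * ‖Z‖ ^ 2 < D * (1 / D ^ 2) * ‖Z‖ ^ 2 := by gcongr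
      _ = ‖Z‖ ^ 2 / D := by field_simp
  linarith

theorem injectivity_from_expander_gap_general
    (d D n : ℕ)
    (A : Fin d → Matrix (Fin D) (Fin D) ℂ)
    (hgap : opNormF (fun Y =>
        (fun Z => ∑ i, A i * Z * (A i)ᴴ)^[n] Y -
          (Y.trace / (D : ℂ)) • (1 : Matrix (Fin D) (Fin D) ℂ)) <
      1 / (D : ℝ) ^ 2) :
    Function.Injective (Gamma d D n A) := by
  rw [← coe_krausMap_pow_sub_depolarizing] at hgap
  intro X Y hXY
  rw [← sub_eq_zero]
  refine eq_zero_of_expander_gap A hgap fun w => ?_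
  rw [Matrix.sub_mul, trace_sub, sub_eq_zero]
  exact congrFun hXY w

/-- if `‖Φ^n − Φ^∞‖_op < 1/D²`, where `Φ(X) = ∑ i, A i X (A i)ᴴ` and
`Φ^∞(X) = tr(X) 𝟙 / D`, then `Γ_n` is injective. -/
theorem injectivity_from_expander_gap
    (d D n : ℕ) (hd : 0 < d) (hD : 0 < D) (hn : 0 < n)
    (A : Fin d → Matrix (Fin D) (Fin D) ℂ)
    (hgap : opNormF (fun Y =>
        (fun Z => ∑ i, A i * Z * (A i)ᴴ)^[n] Y -
          (Y.trace / (D : ℂ)) • (1 : Matrix (Fin D) (Fin D) ℂ)) <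
      1 / (D : ℝ) ^ 2) :
    Function.Injective (Gamma d D n A) :=
  injectivity_from_expander_gap_general d D n A hgap
end
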